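/- The polynomials S_n(q) = Σ_{k=0}^{⌊n/2⌋} (−1)^k q^{k(k−1)/2} q^{n−k} [n−k choose k]_q satisfy, for every integer n ≥ 2, the second-order recurrence S_n(q) = q^{⌊(n+2)/3⌋} S_{n−1}(q) − q^{⌊(2n+1)/3⌋} S_{n−2}(q) in the polynomial ring ℤ[q]. -/

import Mathlib

/-!
Write `G_m = ∑_k (-1)^k q^{k(k-1)/2} [m-k choose k]_q` (`pentagonalSum m`). Splitting
`[n-k choose k]_q` once by the q-Pascal rule
`[a+1 choose k+1] = [a choose k] + q^{k+1} [a choose k+1]`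
gives `S_{m+2} = q^{m+2} G_{m+1} - q^{m+1} G_m`. Splitting `G` by the same rule, and the
resulting sums by the dual rule `[a+1 choose k+1] = q^{a-k} [a choose k] + [a choose k+1]`,
gives `G_{m+3} = -q^{m+1} G_m`, so that `G_{3j+2} = 0` and `G_{3j+1} = q^j G_{3j}` (indeed
`G_{3j} = (-1)^j q^{j(3j-1)/2}`, as in Euler's pentagonal theorem). Hence `S_{3j}`, `S_{3j+1}`,
`S_{3j+2}` are explicit monomial multiples of `G_{3j}`, and in each residue class of `n` mod 3
the recurrence reduces to an identity between monomials.
-/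

open Polynomial Finset

/-- The Gaussian (q-)binomial coefficient `[n choose k]_q ∈ ℤ[q]`, defined through the
q-Pascal recurrence `[n+1 choose k+1] = [n choose k] + q^{k+1} [n choose k+1]`. -/
noncomputable def qBinom : ℕ → ℕ → Polynomial ℤ
  | _, 0 => 1
  | 0, _ + 1 => 0
  | n + 1, k + 1 => qBinom n k + Polynomial.X ^ (k + 1) * qBinom n (k + 1)

/-- `S_n(q) = ∑_{k=0}^{⌊n/2⌋} (-1)^k q^{k(k-1)/2} q^{n-k} [n-k choose k]_q ∈ ℤ[q]`,
the value of `S_n(a)` at `a = q`. -/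
noncomputable def qBinomSumQ (n : ℕ) : Polynomial ℤ :=
  ∑ k ∈ Finset.range (n / 2 + 1),
    (-1) ^ k * Polynomial.X ^ (k * (k - 1) / 2) * Polynomial.X ^ (n - k) * qBinom (n - k) k

@[simp]
lemma qBinom_zero_right (n : ℕ) : qBinom n 0 = 1 := by
  cases n <;> rfl

lemma qBinom_succ_succ (n k : ℕ) :
    qBinom (n + 1) (k + 1) = qBinom n k + X ^ (k + 1) * qBinom n (k + 1) := rfl

lemma qBinom_eq_zero_of_lt {n k : ℕ} (h : n < k) : qBinom n k = 0 := by
  induction n generalizing k with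
  | zero => obtain ⟨k, rfl⟩ := Nat.exists_eq_succ_of_ne_zero h.ne'; rfl
  | succ n ih =>
    obtain ⟨k, rfl⟩ := Nat.exists_eq_succ_of_ne_zero (by omega : k ≠ 0)
    rw [qBinom_succ_succ, ih (by omega), ih (by omega), mul_zero, add_zero]

lemma qBinom_succ_succ' (n k : ℕ) :
    qBinom (n + 1) (k + 1) = X ^ (n - k) * qBinom n k + qBinom n (k + 1) := by
  induction n generalizing k with
  | zero =>
    cases k with
    | zero => simp [qBinom_succ_succ, qBinom_eq_zero_of_lt]
    | succ k => simp [qBinom_eq_zero_of_lt]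
  | succ n ih =>
    cases k with
    | zero =>
      linear_combination (norm := (simp only [qBinom_zero_right, Nat.sub_zero]; ring))
        qBinom_succ_succ (n + 1) 0 + X * ih 0 - qBinom_succ_succ n 0
    | succ k =>
      have hX : X ^ (k + 2) * X ^ (n - (k + 1)) * qBinom n (k + 1)
          = X ^ (n - k) * X ^ (k + 1) * qBinom n (k + 1) := by
        rcases lt_or_ge k n with hkn | hnk
        · rw [← pow_add, ← pow_add]; congr 2; omega
        · simp [qBinom_eq_zero_of_lt (by omega : n < k + 1)]
      simp only [Nat.add_sub_add_right]
      linear_combination qBinom_succ_succ (n + 1) (k + 1) + ih k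
        + X ^ (k + 2) * ih (k + 1) - X ^ (n - k) * qBinom_succ_succ n k
        - qBinom_succ_succ n (k + 1) + hX

lemma sum_range_succ_eq_sub_of_succ {M : Type*} [AddCommGroup M] {u v w : ℕ → M} {N : ℕ}
    (h₀ : u 0 = v 0) (hsucc : ∀ i < N, u (i + 1) = v (i + 1) - w i) :
    ∑ k ∈ range (N + 1), u k = ∑ k ∈ range (N + 1), v k - ∑ k ∈ range N, w k := by
  rw [sum_range_succ', sum_range_succ',
    sum_congr rfl fun i hi => hsucc i (mem_range.1 hi), sum_sub_distrib, h₀]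
  abel

noncomputable def qBinomAltSum (e : ℕ → ℕ) (m : ℕ) : ℤ[X] :=
  ∑ k ∈ range (m / 2 + 1), (-1) ^ k * X ^ e k * qBinom (m - k) k

namespace qBinomAltSum

lemma eq_sum_range (e : ℕ → ℕ) {m N : ℕ} (hN : m / 2 < N) :
    qBinomAltSum e m = ∑ k ∈ range N, (-1) ^ k * X ^ e k * qBinom (m - k) k := by
  refine sum_subset (range_subset_range.2 (by omega)) fun k hkN hkm => ?_
  rw [qBinom_eq_zero_of_lt (by simp at hkN hkm; omega), mul_zero]

lemma congr_exponent {e e' : ℕ → ℕ} {m : ℕ} (h : ∀ k ≤ m / 2, e k = e' k) :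
    qBinomAltSum e m = qBinomAltSum e' m :=
  sum_congr rfl fun k hk => by rw [h k (by simp at hk; omega)]

lemma X_pow_mul (c : ℕ) (e : ℕ → ℕ) (m : ℕ) :
    X ^ c * qBinomAltSum e m = qBinomAltSum (fun k => c + e k) m := by
  rw [qBinomAltSum, mul_sum]
  exact sum_congr rfl fun k _ => by ring

lemma add_two (e : ℕ → ℕ) (m : ℕ) :
    qBinomAltSum e (m + 2) =
      qBinomAltSum (fun k => e k + k) (m + 1) - qBinomAltSum (fun k => e (k + 1)) m := by
  rw [eq_sum_range e (by omega : (m + 2) / 2 < m / 2 + 1 + 1),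
    eq_sum_range _ (by omega : (m + 1) / 2 < m / 2 + 1 + 1)]
  refine sum_range_succ_eq_sub_of_succ (by simp) fun i hi => ?_
  rw [show m + 2 - (i + 1) = m - i + 1 by omega, show m + 1 - (i + 1) = m - i by omega,
    qBinom_succ_succ]
  ring

lemma add_two' (e : ℕ → ℕ) (m : ℕ) :
    qBinomAltSum e (m + 2) =
      qBinomAltSum e (m + 1) - qBinomAltSum (fun k => e (k + 1) + (m - 2 * k)) m := by
  rw [eq_sum_range e (by omega : (m + 2) / 2 < m / 2 + 1 + 1),
    eq_sum_range e (by omega : (m + 1) / 2 < m / 2 + 1 + 1)]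
  refine sum_range_succ_eq_sub_of_succ (by simp) fun i hi => ?_
  rw [show m + 2 - (i + 1) = m - i + 1 by omega, show m + 1 - (i + 1) = m - i by omega,
    qBinom_succ_succ', show m - i - i = m - 2 * i by omega]
  ring

end qBinomAltSum

noncomputable def pentagonalSum (m : ℕ) : ℤ[X] :=
  qBinomAltSum (·.choose 2) m

lemma choose_two_succ (k : ℕ) : (k + 1).choose 2 = k.choose 2 + k := by
  rw [Nat.choose_succ_succ', Nat.choose_one_right, add_comm]

lemma pentagonalSum_add_three (m : ℕ) :
    pentagonalSum (m + 3) = -(X ^ (m + 1) * pentagonalSum m) := by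
  have h₁ : pentagonalSum (m + 3) =
      qBinomAltSum (fun k => (k + 1).choose 2) (m + 2) -
        qBinomAltSum (fun k => (k + 1).choose 2) (m + 1) := by
    rw [pentagonalSum, qBinomAltSum.add_two (·.choose 2) (m + 1)]
    congr 2
    exact funext fun k => (choose_two_succ k).symm
  have h₂ : qBinomAltSum (fun k => (k + 1).choose 2) (m + 2) =
      qBinomAltSum (fun k => (k + 1).choose 2) (m + 1) - X ^ (m + 1) * pentagonalSum m := by
    rw [qBinomAltSum.add_two', pentagonalSum, qBinomAltSum.X_pow_mul]
    congr 1
    refine qBinomAltSum.congr_exponent fun k hk => ?_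
    simp only [choose_two_succ]
    omega
  rw [h₁, h₂]
  ring

lemma pentagonalSum_three_mul_add_one (j : ℕ) :
    pentagonalSum (3 * j + 1) = X ^ j * pentagonalSum (3 * j) := by
  induction j with
  | zero => simp [pentagonalSum, qBinomAltSum]
  | succ j ih =>
    rw [show 3 * (j + 1) + 1 = 3 * j + 1 + 3 by ring, show 3 * (j + 1) = 3 * j + 3 by ring,
      pentagonalSum_add_three, pentagonalSum_add_three, ih]
    ring

lemma pentagonalSum_three_mul_add_two (j : ℕ) :
    pentagonalSum (3 * j + 2) = 0 := by
  induction j with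
  | zero =>
    simp [pentagonalSum, qBinomAltSum, sum_range_succ, qBinom_succ_succ, qBinom_eq_zero_of_lt]
  | succ j ih =>
    rw [show 3 * (j + 1) + 2 = 3 * j + 2 + 3 by ring, pentagonalSum_add_three, ih,
      mul_zero, neg_zero]

lemma qBinomSumQ_eq_qBinomAltSum (n : ℕ) :
    qBinomSumQ n = qBinomAltSum (fun k => k.choose 2 + (n - k)) n :=
  sum_congr rfl fun k _ => by simp only [Nat.choose_two_right, pow_add]; ring

lemma qBinomSumQ_add_two (m : ℕ) :
    qBinomSumQ (m + 2) = X ^ (m + 2) * pentagonalSum (m + 1)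
      - X ^ (m + 1) * pentagonalSum m := by
  rw [qBinomSumQ_eq_qBinomAltSum, qBinomAltSum.add_two, pentagonalSum, pentagonalSum,
    qBinomAltSum.X_pow_mul, qBinomAltSum.X_pow_mul]
  congr 1 <;> refine qBinomAltSum.congr_exponent fun k hk => ?_
  · omega
  · simp only [choose_two_succ]
    omega

lemma qBinomSumQ_three_mul (j : ℕ) : qBinomSumQ (3 * j) = X ^ j * pentagonalSum (3 * j) := by
  cases j with
  | zero => simp [qBinomSumQ, pentagonalSum, qBinomAltSum]
  | succ j =>
    rw [show 3 * (j + 1) = 3 * j + 1 + 2 by ring, qBinomSumQ_add_two,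
      pentagonalSum_three_mul_add_two, show 3 * j + 1 + 2 = 3 * j + 3 by ring,
      pentagonalSum_add_three, pentagonalSum_three_mul_add_one]
    ring

lemma qBinomSumQ_three_mul_add_one (j : ℕ) :
    qBinomSumQ (3 * j + 1) = X ^ (3 * j + 1) * pentagonalSum (3 * j) := by
  cases j with
  | zero => simp [qBinomSumQ, pentagonalSum, qBinomAltSum]
  | succ j =>
    rw [show 3 * (j + 1) + 1 = 3 * j + 2 + 2 by ring, qBinomSumQ_add_two,
      pentagonalSum_three_mul_add_two, show 3 * j + 2 + 1 = 3 * (j + 1) by ring]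
    ring

lemma qBinomSumQ_three_mul_add_two (j : ℕ) :
    qBinomSumQ (3 * j + 2) = (X ^ (4 * j + 2) - X ^ (3 * j + 1)) * pentagonalSum (3 * j) := by
  rw [qBinomSumQ_add_two, pentagonalSum_three_mul_add_one]
  ring

/-- For every `n ≥ 2`, `S_n(q) = q^{⌊(n+2)/3⌋} S_{n-1}(q) - q^{⌊(2n+1)/3⌋} S_{n-2}(q)`
in `ℤ[q]`. -/
theorem qBinomSumQ_second_order_recurrence (n : ℕ) (hn : 2 ≤ n) :
    qBinomSumQ n =
      Polynomial.X ^ ((n + 2) / 3) * qBinomSumQ (n - 1)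
        - Polynomial.X ^ ((2 * n + 1) / 3) * qBinomSumQ (n - 2) := by
  obtain ⟨j, rfl | rfl | rfl⟩ : ∃ j, n = 3 * j + 2 ∨ n = 3 * (j + 1) ∨ n = 3 * (j + 1) + 1 :=
    ⟨(n - 2) / 3, by omega⟩
  · rw [show (3 * j + 2 + 2) / 3 = j + 1 by omega,
      show (2 * (3 * j + 2) + 1) / 3 = 2 * j + 1 by omega,
      show 3 * j + 2 - 1 = 3 * j + 1 by omega, show 3 * j + 2 - 2 = 3 * j by omega,
      qBinomSumQ_three_mul_add_two, qBinomSumQ_three_mul_add_one, qBinomSumQ_three_mul]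
    ring
  · rw [show (3 * (j + 1) + 2) / 3 = j + 1 by omega,
      show (2 * (3 * (j + 1)) + 1) / 3 = 2 * j + 2 by omega,
      show 3 * (j + 1) - 1 = 3 * j + 2 by omega, show 3 * (j + 1) - 2 = 3 * j + 1 by omega,
      qBinomSumQ_three_mul, qBinomSumQ_three_mul_add_two, qBinomSumQ_three_mul_add_one,
      show 3 * (j + 1) = 3 * j + 3 by ring, pentagonalSum_add_three]
    ring
  · rw [show (3 * (j + 1) + 1 + 2) / 3 = j + 2 by omega,
      show (2 * (3 * (j + 1) + 1) + 1) / 3 = 2 * j + 3 by omega,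
      show 3 * (j + 1) + 1 - 1 = 3 * (j + 1) by omega,
      show 3 * (j + 1) + 1 - 2 = 3 * j + 2 by omega,
      qBinomSumQ_three_mul_add_one, qBinomSumQ_three_mul, qBinomSumQ_three_mul_add_two,
      show 3 * (j + 1) = 3 * j + 3 by ring, pentagonalSum_add_three]
    ring
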